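/- arXiv:1009.2734 — 9 statements merged into one kernel-verified Lean document; each statement's English description precedes it below -/
import Mathlib

section
/- The set M of all words over the alphabet {b₁, b₂} of the form b₁³ V b₂³, where V begins with b₂, ends with b₁, and contains neither b₁³ nor b₂³ as a subword, has the property that no element of M is a proper subword of another element of M. -/
/-- The two letters of the alphabet. -/
def b1 : Fin 2 := 0
def b2 : Fin 2 := 1

/-- The set `M` of words `b₁³ V b₂³` where `V` begins with `b₂`, ends with `b₁`,
and contains neither `b₁³` nor `b₂³` as a subword. -/
def Mset : Set (List (Fin 2)) :=
  {w | ∃ V : List (Fin 2), w = [b1, b1, b1] ++ V ++ [b2, b2, b2] ∧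
    V.head? = some b2 ∧ V.getLast? = some b1 ∧
    ¬ [b1, b1, b1] <:+: V ∧ ¬ [b2, b2, b2] <:+: V}

/-!
In a word `b₁³ W b₂³` of `M`, the block `b₁³` occurs only as the prefix: `W` has no `b₁³`, the
trailing `b₂`'s cannot take part in one, and an occurrence overlapping the leading block would
force `W` to begin with `b₁`. Symmetrically `b₂³` occurs only as the suffix. So if `Y ∈ M` occurs
in `Z ∈ M`, the occurrence of `Y` starts at the start of `Z` and ends at its end.
-/

namespace List

variable {α : Type*}

theorem eq_nil_of_append_replicate_append_eq_replicate_append {x : α} {n : ℕ} {s u r : List α}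
    (hr : r.head? ≠ some x) (hno : ¬ replicate n x <:+: r)
    (h : s ++ replicate n x ++ u = replicate n x ++ r) : s = [] := by
  rw [append_assoc, append_eq_append_iff] at h
  rcases h with ⟨a, hrep, hu⟩ | ⟨c, -, rfl⟩
  · obtain ⟨hlen, -, ha⟩ := append_eq_replicate_iff.mp hrep.symm
    by_contra hs
    have hk : 0 < n - a.length := by
      have := length_pos_iff.mpr hs
      omega
    have hsplit : replicate n x = replicate a.length x ++ replicate (n - a.length) x := by
      rw [replicate_append_replicate]; congr 1; omega
    rw [ha, hsplit, append_assoc] at hu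
    have hr_eq := append_cancel_left hu
    rw [← hr_eq, head?_append, head?_replicate, if_neg hk.ne'] at hr
    exact hr rfl
  · exact absurd ⟨c, u, by simp⟩ hno

theorem eq_nil_of_append_replicate_append_eq_append_replicate {x : α} {n : ℕ} {s u r : List α}
    (hr : r.getLast? ≠ some x) (hno : ¬ replicate n x <:+: r)
    (h : u ++ replicate n x ++ s = r ++ replicate n x) : s = [] := by
  rw [← reverse_eq_nil_iff]
  refine eq_nil_of_append_replicate_append_eq_replicate_append (u := u.reverse) (r := r.reverse)
    (by rwa [head?_reverse]) (by rwa [← reverse_replicate, reverse_infix]) ?_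
  simpa using congrArg reverse h

theorem IsInfix.left_of_append {l W U : List α} (h : l <:+: W ++ U)
    (hl : ∀ a ∈ l.getLast?, a ∉ U) : l <:+: W := by
  induction U using reverseRecOn with
  | nil => simpa using h
  | append_singleton U b ih =>
    rw [← append_assoc, infix_concat_iff, suffix_concat_iff] at h
    rcases h with (rfl | ⟨t, rfl, -⟩) | h
    · exact nil_infix
    · simp at hl
    · exact ih h fun a ha haU => hl a ha (mem_append_left _ haU)

theorem IsInfix.right_of_append {l W U : List α} (h : l <:+: U ++ W)
    (hl : ∀ a ∈ l.head?, a ∉ U) : l <:+: W := by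
  rw [← reverse_infix] at h ⊢
  rw [reverse_append] at h
  exact h.left_of_append (by simpa using hl)

end List

/-- no element of `M` is a proper subword of another element of `M`. -/
theorem stmt3 (Y Z : List (Fin 2)) (hY : Y ∈ Mset) (hZ : Z ∈ Mset) (h : Y <:+: Z) :
    Y = Z := by
  obtain ⟨V, rfl, -, -, -, -⟩ := hY
  obtain ⟨W, rfl, hW₂, hW₁, hW₁₁₁, hW₂₂₂⟩ := hZ
  obtain ⟨s, t, h⟩ := h
  have hs : s = [] := by
    refine List.eq_nil_of_append_replicate_append_eq_replicate_append (x := b1) (n := 3)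
      (u := V ++ [b2, b2, b2] ++ t) (r := W ++ [b2, b2, b2])
      (by rw [List.head?_append, hW₂]; decide) ?_ (by simpa using h)
    exact fun hc => hW₁₁₁ (hc.left_of_append (by simp [b1, b2]))
  subst hs
  have ht : t = [] := by
    refine List.eq_nil_of_append_replicate_append_eq_append_replicate (x := b2) (n := 3)
      (u := [b1, b1, b1] ++ V) (r := [b1, b1, b1] ++ W)
      (by rw [List.getLast?_append, hW₁]; decide) ?_ (by simpa using h)
    exact fun hc => hW₂₂₂ (hc.right_of_append (by simp [b1, b2]))
  subst ht
  simpa using h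
end

section
/- Let M be the set of all words over {b₁, b₂} of the form b₁³ V b₂³ where V begins with b₂, ends with b₁, and contains neither b₁³ nor b₂³ as a subword. If Y, Z ∈ M and Y ≡ UV, Z ≡ WU for some words V, W and some nonempty word U, then U ≡ Y ≡ Z (i.e., V and W are empty). -/
namespace List

variable {α : Type*}

theorem IsInfix.of_append_of_getLast_notMem {l V R : List α} (h : l <:+: V ++ R) (hl : l ≠ [])
    (hlast : l.getLast hl ∉ R) : l <:+: V := by
  obtain ⟨s, t, hst⟩ := h
  rcases append_eq_append_iff.mp hst with ⟨u, rfl, -⟩ | ⟨c, hsl, rfl⟩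
  · exact ⟨s, u, rfl⟩
  · rcases eq_or_ne c [] with rfl | hc
    · exact ⟨s, [], by simpa using hsl⟩
    · -- otherwise the occurrence of `l` would end inside `R`
      have hsuf : l <:+ V ++ c := hsl ▸ suffix_append s l
      refine absurd (mem_append_left t (getLast_mem hc)) ?_
      rwa [hsuf.getLast hl, ← (suffix_append V c).getLast hc] at hlast

theorem eq_nil_of_cube_append_eq {a b : α} (hab : a ≠ b) {V R P S : List α}
    (hV : V.head? = some b) (hVa : ¬ [a, a, a] <:+: V) (hR : a ∉ R)
    (h : [a, a, a] ++ V ++ R = P ++ [a, a, a] ++ S) : P = [] := by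
  obtain ⟨V, rfl⟩ : ∃ V', V = b :: V' := by
    cases V <;> simp_all
  rcases P with _ | ⟨x, _ | ⟨y, _ | ⟨z, P⟩⟩⟩
  · rfl
  -- a shift by one or two letters puts an `a` where `V` begins with `b`
  · simp [hab.symm] at h
  · simp [hab.symm] at h
  · simp only [cons_append, nil_append, cons.injEq] at h
    refine (hVa (IsInfix.of_append_of_getLast_notMem ⟨P, S, h.2.2.2.symm⟩ (by simp) ?_)).elim
    simpa using hR

theorem eq_nil_of_append_cube_eq {a b : α} (hab : a ≠ b) {V L P S : List α}
    (hV : V.getLast? = some a) (hVb : ¬ [b, b, b] <:+: V) (hL : b ∉ L)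
    (h : L ++ V ++ [b, b, b] = P ++ [b, b, b] ++ S) : S = [] := by
  have hS : S.reverse = [] :=
    eq_nil_of_cube_append_eq hab.symm (V := V.reverse) (R := L.reverse) (by simpa using hV)
      (fun h => hVb (reverse_infix.mp h)) (by simpa using hL) (by simpa using congrArg reverse h)
  exact reverse_eq_nil_iff.mp hS

end List

section

variable {w P S : List (Fin 2)}

theorem Mset.cube_b1_prefix (hw : w ∈ Mset) : [b1, b1, b1] <+: w := by
  obtain ⟨V, rfl, -⟩ := hw
  exact ⟨V ++ [b2, b2, b2], by simp⟩

theorem Mset.cube_b2_suffix (hw : w ∈ Mset) : [b2, b2, b2] <:+ w := by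
  obtain ⟨V, rfl, -⟩ := hw
  exact ⟨[b1, b1, b1] ++ V, rfl⟩

theorem Mset.eq_nil_of_eq_append_cube_b1 (hw : w ∈ Mset) (h : w = P ++ [b1, b1, b1] ++ S) :
    P = [] := by
  obtain ⟨V, rfl, hV, -, hV1, -⟩ := hw
  exact List.eq_nil_of_cube_append_eq (by decide) hV hV1 (by decide) h

theorem Mset.eq_nil_of_eq_append_cube_b2 (hw : w ∈ Mset) (h : w = P ++ [b2, b2, b2] ++ S) :
    S = [] := by
  obtain ⟨V, rfl, -, hV, -, hV2⟩ := hw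
  exact List.eq_nil_of_append_cube_eq (by decide) hV hV2 (by decide) h

end

/-- if `Y, Z ∈ M`, `Y ≡ UV` and `Z ≡ WU` with `U` nonempty, then
`U ≡ Y ≡ Z` (so `V` and `W` are empty). -/
theorem stmt4 (Y Z U V W : List (Fin 2)) (hY : Y ∈ Mset) (hZ : Z ∈ Mset)
    (hU : U ≠ []) (h1 : Y = U ++ V) (h2 : Z = W ++ U) :
    U = Y ∧ U = Z := by
  have hUlast : U.getLast hU = b2 := by
    rw [(h2 ▸ List.suffix_append W U : U <:+ Z).getLast hU,
      ← (Mset.cube_b2_suffix hZ).getLast (by simp)]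
    rfl
  have hcube : [b1, b1, b1] <+: U := by
    refine (List.prefix_or_prefix_of_prefix (Mset.cube_b1_prefix hY)
      (h1 ▸ List.prefix_append U V)).resolve_right fun hpre => ?_
    have := hpre.subset (List.getLast_mem hU)
    simp [hUlast, b1, b2] at this
  obtain ⟨S, hS⟩ := hcube
  obtain rfl : W = [] := Mset.eq_nil_of_eq_append_cube_b1 hZ (by rw [h2, ← hS, List.append_assoc])
  obtain rfl : Z = U := h2
  obtain ⟨P, rfl⟩ := Mset.cube_b2_suffix hZ
  obtain rfl : V = [] := Mset.eq_nil_of_eq_append_cube_b2 hY h1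
  exact ⟨by simp [h1], rfl⟩
end

section
/- Let M be a set of words over a finite alphabet satisfying the overlap property. Suppose X₁X₂⋯X_t ≡ S Y₁Y₂⋯Y_m T (letter-for-letter equality) where t, m ≥ 1, all X_n, Y_j ∈ M, and S, T are possibly empty words. Then there exists i ≤ t such that S ≡ X₁⋯X_{i−1}, T ≡ X_{i+m}⋯X_t, and Y_j ≡ X_{i+j−1} for j = 1, …, m. -/
/-- A set of words satisfies the overlap property if (1) no element is a proper subword of
another and (2) whenever `Y ≡ UV` and `Z ≡ WU` with `U` nonempty, `Y ≡ U ≡ Z`. -/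
def OverlapProp {α : Type*} (M : Set (List α)) : Prop :=
  (∀ Y ∈ M, ∀ Z ∈ M, Y <:+: Z → Y = Z) ∧
  (∀ Y ∈ M, ∀ Z ∈ M, ∀ U V W : List α, U ≠ [] → Y = U ++ V → Z = W ++ U →
    U = Y ∧ U = Z)

/-!
A word `w ∈ M` occurring in a product `X₁⋯X_t` of words of `M` cannot start strictly inside some
`X_n`: it would either lie inside `X_n` (excluded by (1)) or overlap a proper suffix of `X_n` with
a prefix of itself (excluded by (2)). Hence every occurrence of `w` starts at a boundary between
factors, and then it must be exactly the next factor. Matching `Y₁, …, Y_m` one after another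
gives the block decomposition.
-/

namespace OverlapProp

variable {α : Type*} {M : Set (List α)}

theorem eq_of_suffix_append_eq (hM : OverlapProp M) {A w S c R Q : List α}
    (hA : A ∈ M) (hw : w ∈ M) (hc : c ≠ []) (hAc : A = S ++ c) (h : w ++ R = c ++ Q) :
    S = [] ∧ A = w ∧ R = Q := by
  rcases List.append_eq_append_iff.1 h with ⟨a, rfl, rfl⟩ | ⟨b, hwcb, rfl⟩
  · have hwA : w = A := hM.1 w hw A hA ⟨S, a, by rw [hAc, List.append_assoc]⟩
    have hlen := congrArg List.length hAc
    rw [← hwA] at hlen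
    simp only [List.length_append] at hlen
    obtain ⟨rfl, rfl⟩ : S = [] ∧ a = [] := by
      simp only [← List.length_eq_zero_iff]; omega
    exact ⟨rfl, hwA.symm, rfl⟩
  · obtain ⟨hcw, hcA⟩ := hM.2 w hw A hA c b S hc hwcb hAc
    have hb : b = [] := by
      simpa [← hcw] using congrArg List.length hwcb
    have hS : S = [] := by
      simpa [← hcA] using congrArg List.length hAc
    subst hb hS
    exact ⟨rfl, hcA.symm.trans hcw, rfl⟩

theorem exists_eq_cons_of_flatten_eq_append (hM : OverlapProp M) (hne : [] ∉ M)
    {X : List (List α)} {w R : List α} (hX : ∀ x ∈ X, x ∈ M) (hw : w ∈ M)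
    (h : X.flatten = w ++ R) : ∃ X', X = w :: X' ∧ R = X'.flatten := by
  cases X with
  | nil =>
    obtain ⟨rfl, -⟩ := List.append_eq_nil_iff.1 h.symm
    exact absurd hw hne
  | cons A X' =>
    have hA : A ∈ M := hX A List.mem_cons_self
    obtain ⟨-, rfl, hR⟩ := hM.eq_of_suffix_append_eq hA hw (fun hA0 => hne (hA0 ▸ hA))
      (List.nil_append A).symm h.symm
    exact ⟨X', rfl, hR⟩

theorem exists_eq_append_of_flatten_eq_append (hM : OverlapProp M) (hne : [] ∉ M)
    {X Y : List (List α)} {T : List α} (hX : ∀ x ∈ X, x ∈ M) (hY : ∀ y ∈ Y, y ∈ M)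
    (h : X.flatten = Y.flatten ++ T) : ∃ X₂, X = Y ++ X₂ ∧ T = X₂.flatten := by
  induction Y generalizing X with
  | nil => exact ⟨X, rfl, by simpa using h.symm⟩
  | cons y Y ih =>
    rw [List.flatten_cons, List.append_assoc] at h
    obtain ⟨X', rfl, hX'⟩ :=
      hM.exists_eq_cons_of_flatten_eq_append hne hX (hY y List.mem_cons_self) h
    obtain ⟨X₂, rfl, hT⟩ := ih (fun x hx => hX x (List.mem_cons_of_mem _ hx))
      (fun y hy => hY y (List.mem_cons_of_mem _ hy)) hX'.symm
    exact ⟨X₂, rfl, hT⟩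

theorem exists_eq_append_cons_of_flatten_eq (hM : OverlapProp M) (hne : [] ∉ M)
    {X : List (List α)} {w S R : List α} (hX : ∀ x ∈ X, x ∈ M) (hw : w ∈ M)
    (h : X.flatten = S ++ (w ++ R)) :
    ∃ X₁ X₂, X = X₁ ++ w :: X₂ ∧ S = X₁.flatten ∧ R = X₂.flatten := by
  induction X generalizing S with
  | nil =>
    obtain ⟨rfl, -⟩ := List.append_eq_nil_iff.1 (List.append_eq_nil_iff.1 h.symm).2
    exact absurd hw hne
  | cons A X' ih =>
    have hA : A ∈ M := hX A List.mem_cons_self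
    have hX' : ∀ x ∈ X', x ∈ M := fun x hx => hX x (List.mem_cons_of_mem _ hx)
    rw [List.flatten_cons] at h
    rcases List.append_eq_append_iff.1 h with ⟨a, rfl, ha⟩ | ⟨c, rfl, hc⟩
    · obtain ⟨X₁, X₂, rfl, rfl, rfl⟩ := ih hX' ha
      exact ⟨A :: X₁, X₂, rfl, rfl, rfl⟩
    · rcases eq_or_ne c [] with rfl | hc0
      · obtain ⟨X₂, rfl, rfl⟩ := hM.exists_eq_cons_of_flatten_eq_append hne hX' hw hc.symm
        exact ⟨[S ++ []], X₂, rfl, by simp, rfl⟩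
      · obtain ⟨rfl, rfl, rfl⟩ := hM.eq_of_suffix_append_eq hA hw hc0 rfl hc
        exact ⟨[], X', rfl, rfl, rfl⟩

end OverlapProp

theorem stmt6_general {α : Type*} (M : Set (List α)) (hM : OverlapProp M)
    (hne : [] ∉ M) (X Y : List (List α)) (S T : List α)
    (hX : ∀ w ∈ X, w ∈ M) (hY : ∀ w ∈ Y, w ∈ M) (hY0 : Y ≠ [])
    (h : X.flatten = S ++ Y.flatten ++ T) :
    ∃ X₁ X₂ : List (List α), X = X₁ ++ Y ++ X₂ ∧ S = X₁.flatten ∧ T = X₂.flatten := by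
  obtain ⟨y, Y', rfl⟩ := List.exists_cons_of_ne_nil hY0
  have hY' : ∀ w ∈ Y', w ∈ M := fun w hw => hY w (List.mem_cons_of_mem _ hw)
  rw [List.flatten_cons, List.append_assoc, List.append_assoc] at h
  obtain ⟨X₁, X₂, rfl, hS, hX₂⟩ :=
    hM.exists_eq_append_cons_of_flatten_eq hne hX (hY y List.mem_cons_self) h
  obtain ⟨X₃, rfl, hT⟩ := hM.exists_eq_append_of_flatten_eq_append hne
    (fun w hw => hX w (by simp [hw])) hY' hX₂.symm
  exact ⟨X₁, X₃, by simp, hS, hT⟩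

/-- if `M` satisfies the overlap property and
`X₁⋯X_t ≡ S Y₁⋯Y_m T` with all `X_n, Y_j ∈ M`, then the `Y_j` match up with a
consecutive block of the `X_n`, `S` being the product of the preceding `X`'s and
`T` the product of the following ones. -/
theorem stmt6 {α : Type*} [Fintype α] (M : Set (List α)) (hM : OverlapProp M)
    (hne : [] ∉ M) (X Y : List (List α)) (S T : List α)
    (hX : ∀ w ∈ X, w ∈ M) (hY : ∀ w ∈ Y, w ∈ M) (hX0 : X ≠ []) (hY0 : Y ≠ [])
    (h : X.flatten = S ++ Y.flatten ++ T) :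
    ∃ X₁ X₂ : List (List α), X = X₁ ++ Y ++ X₂ ∧ S = X₁.flatten ∧ T = X₂.flatten :=
  stmt6_general M hM hne X Y S T hX hY hY0 h
end

section
/- Let M be a set of words over a finite alphabet satisfying the overlap property. Then the subsemigroup of the free semigroup generated by M is free with free basis M; equivalently, if X₁⋯X_t ≡ Y₁⋯Y_m with all X_n, Y_j ∈ M, then t = m and X_j ≡ Y_j for all j. -/
def IsPrefixCode {α : Type*} (M : Set (List α)) : Prop :=
  [] ∉ M ∧ ∀ x ∈ M, ∀ y ∈ M, x <+: y → x = y

namespace IsPrefixCode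

variable {α : Type*} {M : Set (List α)}

theorem eq_of_append_eq_append (hM : IsPrefixCode M) {x y s t : List α} (hx : x ∈ M)
    (hy : y ∈ M) (h : x ++ s = y ++ t) : x = y := by
  rcases List.prefix_or_prefix_of_prefix (List.prefix_append x s)
      (h ▸ List.prefix_append y t) with hxy | hyx
  · exact hM.2 x hx y hy hxy
  · exact (hM.2 y hy x hx hyx).symm

theorem flatten_ne_nil (hM : IsPrefixCode M) {y : List α} {Y : List (List α)}
    (hY : ∀ w ∈ y :: Y, w ∈ M) : (y :: Y).flatten ≠ [] := by
  rw [List.flatten_cons, Ne, List.append_eq_nil_iff, not_and]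
  rintro rfl
  exact absurd (hY [] List.mem_cons_self) hM.1

theorem eq_of_flatten_eq (hM : IsPrefixCode M) {X Y : List (List α)} (hX : ∀ w ∈ X, w ∈ M)
    (hY : ∀ w ∈ Y, w ∈ M) (h : X.flatten = Y.flatten) : X = Y := by
  induction X generalizing Y with
  | nil =>
    cases Y with
    | nil => rfl
    | cons y Y => exact absurd h.symm (hM.flatten_ne_nil hY)
  | cons x X ih =>
    cases Y with
    | nil => exact absurd h (hM.flatten_ne_nil hX)
    | cons y Y =>
      rw [List.flatten_cons, List.flatten_cons] at h
      obtain rfl : x = y := hM.eq_of_append_eq_append (hX x List.mem_cons_self)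
        (hY y List.mem_cons_self) h
      rw [ih (fun w hw => hX w (List.mem_cons_of_mem _ hw))
        (fun w hw => hY w (List.mem_cons_of_mem _ hw)) (List.append_cancel_left h)]

end IsPrefixCode

theorem OverlapProp.isPrefixCode {α : Type*} {M : Set (List α)} (hM : OverlapProp M)
    (hne : [] ∉ M) : IsPrefixCode M :=
  ⟨hne, fun x hx y hy hxy => hM.1 x hx y hy hxy.isInfix⟩

theorem stmt7_general {α : Type*} (M : Set (List α)) (hM : OverlapProp M)
    (hne : [] ∉ M) (X Y : List (List α))
    (hX : ∀ w ∈ X, w ∈ M) (hY : ∀ w ∈ Y, w ∈ M)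
    (h : X.flatten = Y.flatten) :
    X = Y :=
  (hM.isPrefixCode hne).eq_of_flatten_eq hX hY h

/-- if `M` satisfies the overlap property then the subsemigroup of the free
semigroup generated by `M` is free with basis `M`: factorizations over `M` are unique. -/
theorem stmt7 {α : Type*} [Fintype α] (M : Set (List α)) (hM : OverlapProp M)
    (hne : [] ∉ M) (X Y : List (List α))
    (hX : ∀ w ∈ X, w ∈ M) (hY : ∀ w ∈ Y, w ∈ M) (hX0 : X ≠ []) (hY0 : Y ≠ [])
    (h : X.flatten = Y.flatten) :
    X = Y :=
  stmt7_general M hM hne X Y hX hY h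
end

section
/- Let M be an exponential set of words over a finite alphabet, and let S be a semigroup with a function l : S → ℕ satisfying: (D1) l(gh) ≤ l(g)+l(h), and (D2) there is a > 0 with card{g ∈ S : l(g) ≤ r} ≤ a^r for all r ∈ ℕ. Then there exists a constant d > 0 and an injection g ↦ X_g from S into M such that l(g) ≤ ‖X_g‖ < d·l(g) for all g ∈ S. -/
/-- A set of words over a finite alphabet is exponential if
`card{X ∈ M : ‖X‖ ≤ i} ≥ c^i` for some `c > 1` and all large `i`. -/
def ExpSet {α : Type*} (M : Set (List α)) : Prop :=
  ∃ (N : ℕ) (c : ℝ), 1 < c ∧ ∀ i : ℕ, N ≤ i →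
    c ^ i ≤ ({x ∈ M | x.length ≤ i}).ncard

/-- Words of length `≤ n` embed into `Fin n → Option α` by reading off their letters. -/
lemma ncard_length_le_le {α : Type*} [Fintype α] (n : ℕ) :
    {w : List α | w.length ≤ n}.ncard ≤ (Fintype.card α + 1) ^ n := by
  have hinj : Set.InjOn (fun (w : List α) (i : Fin n) => w[i.1]?) {w | w.length ≤ n} := by
    intro w₁ h₁ w₂ h₂ h
    refine List.ext_getElem? fun i => ?_
    by_cases hi : i < n
    · exact congrFun h ⟨i, hi⟩
    · rw [List.getElem?_eq_none (h₁.trans (not_lt.mp hi)),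
        List.getElem?_eq_none (h₂.trans (not_lt.mp hi))]
  calc {w : List α | w.length ≤ n}.ncard
      ≤ (Set.univ : Set (Fin n → Option α)).ncard :=
        Set.ncard_le_ncard_of_injOn _ (fun _ _ => Set.mem_univ _) hinj
    _ = (Fintype.card α + 1) ^ n := by
        simp [Nat.card_eq_fintype_card, Fintype.card_option]

def lengthBand {α : Type*} (M : Set (List α)) (D r : ℕ) : Set (List α) :=
  {X ∈ M | r ≤ X.length ∧ X.length ≤ D * r}

lemma lengthBand_finite {α : Type*} [Finite α] (M : Set (List α)) (D r : ℕ) :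
    (lengthBand M D r).Finite :=
  (List.finite_length_le α (D * r)).subset fun _ hX => hX.2.2

/-- Since the words shorter than `r` are at most `(|α| + 1) ^ r` in number, choosing `D` with
`c ^ D ≥ b + |α| + 1` leaves at least `b ^ r` words of `M` in the band. -/
lemma ExpSet.exists_pow_le_ncard_lengthBand {α : Type*} [Fintype α] {M : Set (List α)}
    (hM : ExpSet M) {b : ℝ} (hb : 0 ≤ b) :
    ∃ D : ℕ, ∀ r : ℕ, 1 ≤ r → b ^ r ≤ (lengthBand M D r).ncard := by
  obtain ⟨N, c, hc, hMc⟩ := hM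
  set k : ℝ := Fintype.card α + 1
  obtain ⟨m, hm⟩ := pow_unbounded_of_one_lt (b + k) hc
  refine ⟨max m N, fun r hr => ?_⟩
  set D := max m N
  have hshort : (({X ∈ M | X.length < r} : Set (List α)).ncard : ℝ) ≤ k ^ r := by
    have := (Set.ncard_le_ncard (fun X (hX : X ∈ {X ∈ M | X.length < r}) => hX.2.le)
      (List.finite_length_le α r)).trans (ncard_length_le_le (α := α) r)
    simp only [k]
    exact_mod_cast this
  have hsplit : (({X ∈ M | X.length ≤ D * r} : Set (List α)).ncard : ℝ) ≤
      (lengthBand M D r).ncard + ({X ∈ M | X.length < r} : Set (List α)).ncard := by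
    have hsub : {X ∈ M | X.length ≤ D * r} ⊆ lengthBand M D r ∪ {X ∈ M | X.length < r} := by
      rintro X ⟨hXM, hX⟩
      rcases lt_or_ge X.length r with h | h
      · exact Or.inr ⟨hXM, h⟩
      · exact Or.inl ⟨hXM, h, hX⟩
    exact_mod_cast (Set.ncard_le_ncard hsub ((lengthBand_finite M D r).union
      ((List.finite_length_le α r).subset fun _ hX => hX.2.le))).trans
      (Set.ncard_union_le _ _)
  have hk : 0 ≤ k := by positivity
  calc b ^ r = b ^ r + k ^ r - k ^ r := by ring
    _ ≤ (b + k) ^ r - k ^ r := by gcongr; exact pow_add_pow_le hb hk (by omega)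
    _ ≤ (c ^ m) ^ r - k ^ r := by gcongr
    _ ≤ c ^ (D * r) - k ^ r := by
        rw [← pow_mul]
        gcongr
        · exact hc.le
        · exact le_max_left _ _
    _ ≤ (lengthBand M D r).ncard := by
        have := hMc (D * r) ((le_max_right m N).trans (Nat.le_mul_of_pos_right D hr))
        linarith

/-- Hall's marriage theorem, with the Hall condition for a finite `s` checked on the sublevel set
of `l` at the maximum of `l` on `s`. -/
lemma exists_injective_mem_of_ncard_sublevel_le {ι β : Type*} (l : ι → ℕ) (W : ℕ → Set β)
    (hW : ∀ r, (W r).Finite) (hl : ∀ r, {i | l i ≤ r}.Finite)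
    (hcard : ∀ i, {j | l j ≤ l i}.ncard ≤ (W (l i)).ncard) :
    ∃ f : ι → β, Function.Injective f ∧ ∀ i, f i ∈ W (l i) := by
  classical
  let t : ι → Finset β := fun i => (hW (l i)).toFinset
  have hall : ∀ s : Finset ι, s.card ≤ (s.biUnion t).card := by
    intro s
    rcases s.eq_empty_or_nonempty with rfl | hs
    · simp
    obtain ⟨i, hi, hmax⟩ := s.exists_max_image l hs
    calc s.card = (s : Set ι).ncard := (Set.ncard_coe_finset s).symm
      _ ≤ {j | l j ≤ l i}.ncard := Set.ncard_le_ncard (fun j hj => hmax j hj) (hl (l i))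
      _ ≤ (W (l i)).ncard := hcard i
      _ = (t i).card := Set.ncard_eq_toFinset_card _ (hW (l i))
      _ ≤ (s.biUnion t).card := Finset.card_le_card (Finset.subset_biUnion_of_mem t hi)
  obtain ⟨f, hf, hft⟩ := (Finset.all_card_le_biUnion_card_iff_exists_injective t).mp hall
  exact ⟨f, hf, fun i => (hW (l i)).mem_toFinset.mp (hft i)⟩

theorem stmt8_general {α : Type*} [Fintype α] (M : Set (List α)) (hM : ExpSet M)
    {S : Type*} (l : S → ℕ) (hpos : ∀ g, 1 ≤ l g)
    (hD2 : ∃ a : ℝ, 0 < a ∧ ∀ r : ℕ, {g : S | l g ≤ r}.Finite ∧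
      ({g : S | l g ≤ r}).ncard ≤ a ^ r) :
    ∃ d : ℝ, 0 < d ∧ ∃ F : S → List α, Function.Injective F ∧
      ∀ g : S, F g ∈ M ∧ (l g : ℝ) ≤ (F g).length ∧ ((F g).length : ℝ) < d * l g := by
  obtain ⟨a, ha, hD2⟩ := hD2
  obtain ⟨D, hD⟩ := hM.exists_pow_le_ncard_lengthBand ha.le
  have hcard (g : S) : {h | l h ≤ l g}.ncard ≤ (lengthBand M D (l g)).ncard := by
    exact_mod_cast (hD2 (l g)).2.trans (hD (l g) (hpos g))
  obtain ⟨F, hF, hFW⟩ := exists_injective_mem_of_ncard_sublevel_le l (lengthBand M D)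
    (lengthBand_finite M D) (fun r => (hD2 r).1) hcard
  refine ⟨D + 1, by positivity, F, hF, fun g => ?_⟩
  obtain ⟨hFM, hlow, hhigh⟩ := hFW g
  have hlt : (F g).length < (D + 1) * l g := by nlinarith [hpos g]
  exact ⟨hFM, by exact_mod_cast hlow, by exact_mod_cast hlt⟩

/-- given an exponential set `M` and `l : S → ℕ` satisfying (D1) and (D2),
there are `d > 0` and an injection `g ↦ X_g` of `S` into `M` with `l(g) ≤ ‖X_g‖ < d·l(g)`. -/
theorem stmt8 {α : Type*} [Fintype α] (M : Set (List α)) (hM : ExpSet M)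
    {S : Type*} [Semigroup S] (l : S → ℕ) (hpos : ∀ g, 1 ≤ l g)
    (hD1 : ∀ g h : S, l (g * h) ≤ l g + l h)
    (hD2 : ∃ a : ℝ, 0 < a ∧ ∀ r : ℕ, {g : S | l g ≤ r}.Finite ∧
      ({g : S | l g ≤ r}).ncard ≤ a ^ r) :
    ∃ d : ℝ, 0 < d ∧ ∃ F : S → List α, Function.Injective F ∧
      ∀ g : S, F g ∈ M ∧ (l g : ℝ) ≤ (F g).length ∧ ((F g).length : ℝ) < d * l g :=
  stmt8_general M hM l hpos hD2
end

section
/- Let S be a semigroup and let {X_g}_{g∈S} be an injective family of words over {b₁, b₂} lying in a set satisfying the overlap property. Then the homomorphism β from the free semigroup on {x_g : g ∈ S} to the free semigroup F(b₁,b₂) defined by β(x_g) = X_g is injective. -/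
/-- The word (nonempty list of letters) corresponding to an element of a free semigroup. -/
def FSword {α : Type*} (x : FreeSemigroup α) : List α := x.head :: x.tail

theorem List.flatMap_injective_of_prefix {ι α : Type*} {w : ι → List α}
    (hne : ∀ i, w i ≠ []) (hprefix : ∀ i j, w i <+: w j → i = j) :
    Function.Injective (List.flatMap w) := by
  intro L₁
  induction L₁ with
  | nil =>
    rintro (_ | ⟨j, L₂⟩) h
    · rfl
    · exact absurd (List.append_eq_nil_iff.mp h.symm).1 (hne j)
  | cons i L₁ ih =>
    rintro (_ | ⟨j, L₂⟩) h
    · exact absurd (List.append_eq_nil_iff.mp h).1 (hne i)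
    · simp only [List.flatMap_cons] at h
      have hij : i = j := by
        rcases List.prefix_or_prefix_of_prefix (h ▸ List.prefix_append (w i) _)
            (List.prefix_append (w j) _) with hp | hp
        · exact hprefix i j hp
        · exact (hprefix j i hp).symm
      subst hij
      rw [ih (List.append_cancel_left h)]

theorem OverlapProp.eq_of_prefix {α : Type*} {M : Set (List α)} (hM : OverlapProp M)
    {Y Z : List α} (hY : Y ∈ M) (hZ : Z ∈ M) (h : Y <+: Z) : Y = Z :=
  hM.1 Y hY Z hZ h.isInfix

section FSword

variable {α : Type*}

theorem FSword_injective : Function.Injective (FSword (α := α)) := by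
  rintro ⟨a, l⟩ ⟨b, m⟩ h
  simp only [FSword, List.cons.injEq] at h
  rw [h.1, h.2]

theorem FSword_ne_nil (x : FreeSemigroup α) : FSword x ≠ [] :=
  List.cons_ne_nil _ _

theorem FSword_mul (x y : FreeSemigroup α) : FSword (x * y) = FSword x ++ FSword y := by
  simp [FSword]

theorem FSword_lift {S : Type*} (X : S → FreeSemigroup α) (a : FreeSemigroup S) :
    FSword (FreeSemigroup.lift X a) = (FSword a).flatMap (fun g => FSword (X g)) := by
  induction a with
  | ih1 g =>
    rw [FreeSemigroup.lift_of]
    simp [FSword, FreeSemigroup.of]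
  | ih2 x y hx hy => rw [map_mul, FSword_mul, FSword_mul, hx, hy, List.flatMap_append]

end FSword

theorem stmt10_general {S : Type*} (M : Set (List (Fin 2))) (hM : OverlapProp M)
    (X : S → FreeSemigroup (Fin 2)) (hinj : Function.Injective X)
    (hmem : ∀ g : S, FSword (X g) ∈ M) :
    Function.Injective ⇑(FreeSemigroup.lift X) := by
  have hcode : Function.Injective (List.flatMap fun g => FSword (X g)) :=
    List.flatMap_injective_of_prefix (fun g => FSword_ne_nil (X g)) fun g h hgh =>
      hinj (FSword_injective (hM.eq_of_prefix (hmem g) (hmem h) hgh))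
  intro a b hab
  apply FSword_injective
  apply hcode
  rw [← FSword_lift, ← FSword_lift, hab]

/-- if `{X_g}_{g ∈ S}` is an injective family of words over `{b₁,b₂}` lying in
a set `M` satisfying the overlap property, then the homomorphism `β` of the free semigroup on
`{x_g : g ∈ S}` to `F(b₁,b₂)` defined by `β(x_g) = X_g` is injective. -/
theorem stmt10 {S : Type*} [Semigroup S] (M : Set (List (Fin 2))) (hM : OverlapProp M)
    (hne : [] ∉ M) (X : S → FreeSemigroup (Fin 2)) (hinj : Function.Injective X)
    (hmem : ∀ g : S, FSword (X g) ∈ M) :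
    Function.Injective ⇑(FreeSemigroup.lift X) :=
  stmt10_general M hM X hinj hmem
end

section
/- For any semigroup S and any function l : S → ℕ satisfying (D1) l(gh) ≤ l(g)+l(h) and (D2) card{g ∈ S : l(g) ≤ r} ≤ a^r for some a > 0 and all r, there exists an embedding of S into a semigroup H generated by a two-element set B = {b₁, b₂} such that the restriction of the length function |·|_B to S is equivalent to l, i.e., there exist constants c₁, c₂ > 0 with c₁ l(g) ≤ |g|_B ≤ c₂ l(g) for all g ∈ S. -/
/-- The product of a (nonempty) list of elements of a semigroup; `none` for the empty list. -/
def listProd {M : Type*} [Semigroup M] : List M → Option M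
  | [] => none
  | a :: t => some (t.foldl (· * ·) a)

/-- `RepLen B h n` : `h` is represented by some word of length `n` over the alphabet `B`. -/
def RepLen {M : Type*} [Semigroup M] (B : Set M) (h : M) (n : ℕ) : Prop :=
  ∃ w : List M, (∀ x ∈ w, x ∈ B) ∧ listProd w = some h ∧ w.length = n

/-- `lenOf B h` : the length of a shortest word over `B` representing `h`. -/
noncomputable def lenOf {M : Type*} [Semigroup M] (B : Set M) (h : M) : ℕ :=
  sInf {n | RepLen B h n}

/-!
Encode `g` by a binary word `frame (c g)` of length `≍ l g`: by (D2) the at most `2 ^ (K n)`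
elements with `l g = n` get distinct bit strings of length `K n`, followed by `n` in unary so that
the code is suffix-free, and every code word is spread out by `false`s and ends in the marker
`true, true`, which occurs nowhere else.

`H` is the transition semigroup of the automaton that reads a word from right to left, decodes
consecutive code words and multiplies the decoded elements. From a state in the middle of a code
word the marker leads to the dead state, so the code words of `g * h` and of `g` followed by `h`
act alike and `g ↦ frame (c g)` induces an embedding `S → H`; `H` is generated by the two letters,
giving `|φ g| ≤ |frame (c g)| ≤ C l g`. Conversely each letter raises the weight
`l (decoded product) + |buffer|` by at most one, by (D1), so every word for `φ g` has length
at least `l g`.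
-/

section WordLength

variable {M : Type*} [Semigroup M] {B : Set M} {h : M} {m n : ℕ}

theorem lenOf_le_of_repLen (hn : RepLen B h n) : lenOf B h ≤ n :=
  Nat.sInf_le hn

theorem le_lenOf (hex : ∃ n, RepLen B h n) (hle : ∀ n, RepLen B h n → m ≤ n) :
    m ≤ lenOf B h :=
  le_csInf hex hle

end WordLength

namespace Subsemigroup

variable {M A : Type*} [Monoid M]

theorem coe_foldl_mul {P : Subsemigroup M} (a : P) (t : List P) :
    ((t.foldl (· * ·) a : P) : M) = a * (t.map (↑)).prod := by
  induction t generalizing a with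
  | nil => simp
  | cons b t ih => simp [ih, mul_assoc]

theorem listProd_eq_some_iff {P : Subsemigroup M} (w : List P) (h : P) :
    listProd w = some h ↔ w ≠ [] ∧ (w.map (↑)).prod = (h : M) := by
  cases w with
  | nil => simp [listProd]
  | cons a t => simp [listProd, Subtype.ext_iff, coe_foldl_mul]

theorem prod_map_mem_closure_range (ρ : A → M) {u : List A} (hu : u ≠ []) :
    (u.map ρ).prod ∈ closure (Set.range ρ) := by
  induction u with
  | nil => exact absurd rfl hu
  | cons a u ih =>
    rcases eq_or_ne u [] with rfl | hu'
    · simpa using subset_closure (Set.mem_range_self a)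
    · simpa using mul_mem (subset_closure (Set.mem_range_self a)) (ih hu')

def gen (ρ : A → M) (a : A) : closure (Set.range ρ) :=
  ⟨ρ a, subset_closure (Set.mem_range_self a)⟩

theorem range_gen (ρ : A → M) :
    Set.range (gen ρ) = ((↑) : closure (Set.range ρ) → M) ⁻¹' Set.range ρ := by
  ext x
  exact ⟨fun ⟨a, ha⟩ => ⟨a, congrArg Subtype.val ha⟩, fun ⟨a, ha⟩ => ⟨a, Subtype.ext ha⟩⟩

theorem closure_range_gen (ρ : A → M) : closure (Set.range (gen ρ)) = ⊤ := by
  rw [range_gen, closure_closure_coe_preimage]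

theorem repLen_range_gen_iff (ρ : A → M) (h : closure (Set.range ρ)) (n : ℕ) :
    RepLen (Set.range (gen ρ)) h n ↔
      ∃ u : List A, u ≠ [] ∧ (u.map ρ).prod = h ∧ u.length = n := by
  constructor
  · rintro ⟨w, hw, hprod, rfl⟩
    obtain ⟨u, rfl⟩ : w ∈ Set.range (List.map (gen ρ)) := by
      rw [Set.range_list_map]; exact hw
    rw [listProd_eq_some_iff, List.map_map] at hprod
    exact ⟨u, by simpa using hprod.1, hprod.2, by simp⟩
  · rintro ⟨u, hu, hprod, rfl⟩
    refine ⟨u.map (gen ρ), by simp, ?_, by simp⟩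
    rw [listProd_eq_some_iff, List.map_map]
    exact ⟨by simpa using hu, hprod⟩

end Subsemigroup

namespace List

def spread (L : List Bool) : List Bool :=
  L.flatMap fun x => [false, x]

@[simp] theorem spread_nil : spread [] = [] := rfl

@[simp] theorem spread_cons (x : Bool) (L : List Bool) :
    spread (x :: L) = false :: x :: spread L := rfl

@[simp] theorem length_spread (L : List Bool) : (spread L).length = 2 * L.length := by
  induction L with
  | nil => rfl
  | cons x L ih => simp only [spread_cons, length_cons, ih]; ring

theorem IsSuffix.of_spread {L₁ L₂ : List Bool} (h : spread L₁ <:+ spread L₂) : L₁ <:+ L₂ := by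
  induction L₂ generalizing L₁ with
  | nil =>
    rw [spread_nil, suffix_nil] at h
    simpa using congrArg length h
  | cons x L₂ ih =>
    rw [spread_cons, suffix_cons_iff, suffix_cons_iff] at h
    rcases h with h | h | h
    · cases L₁ with
      | nil => simp at h
      | cons y L₁ =>
        simp only [spread_cons, cons.injEq, true_and] at h
        have hL : L₁ = L₂ := (ih (h.2 ▸ suffix_refl _)).eq_of_length <| by
          simpa using congrArg length h.2
        rw [h.1, hL]
    · have := congrArg length h
      simp only [length_spread, length_cons] at this
      omega
    · exact (ih h).trans (suffix_cons _ _)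

def frame (L : List Bool) : List Bool :=
  spread L ++ [false, true, true]

@[simp] theorem length_frame (L : List Bool) : (frame L).length = 2 * L.length + 3 := by
  simp [frame]

theorem frame_eq_false_cons (L : List Bool) : ∃ r, frame L = false :: r := by
  cases L <;> simp [frame]

theorem frame_eq_append_true_true (L : List Bool) :
    frame L = (spread L ++ [false]) ++ [true, true] := by
  simp [frame]

theorem eq_nil_of_true_true_suffix_frame {L v : List Bool} (h : true :: true :: v <:+ frame L) :
    v = [] := by
  induction L with
  | nil => simpa [frame, suffix_cons_iff] using h
  | cons x L ih =>
    obtain ⟨r, hr⟩ := frame_eq_false_cons L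
    have hcons : frame (x :: L) = false :: x :: frame L := by simp [frame]
    rw [hcons, suffix_cons_iff, suffix_cons_iff] at h
    rcases h with h | h | h
    · simp at h
    · simp [hr] at h
    · exact ih h

theorem IsSuffix.of_frame {L₁ L₂ : List Bool} (h : frame L₁ <:+ frame L₂) : L₁ <:+ L₂ :=
  IsSuffix.of_spread (suffix_append_self_iff.1 h)

theorem eq_of_append_true_replicate_suffix {A B : List Bool} {n m : ℕ}
    (h : A ++ true :: replicate n false <:+ B ++ true :: replicate m false) : n = m := by
  rw [← reverse_prefix] at h
  simp only [reverse_append, reverse_cons, reverse_replicate, append_assoc,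
    singleton_append] at h
  induction n generalizing m with
  | zero => cases m <;> simp_all [replicate_succ]
  | succ n ih =>
    cases m with
    | zero => simp [replicate_succ] at h
    | succ m => simpa using ih (by simpa [replicate_succ] using h)

end List

namespace Decoder

open List

variable {S : Type*}

/-- In a live state `some (s, buf)`, `s` is the product of the code words decoded so far and `buf`
the part of the current code word read so far; `none` is the dead state. -/
abbrev State (S : Type*) := Option (WithOne S × List Bool)

theorem ne_nil_of_frame {w : S → List Bool} (hframe : ∀ g, ∃ L, w g = frame L) (g : S) :
    w g ≠ [] := by
  obtain ⟨L, hL⟩ := hframe g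
  exact ne_nil_of_length_pos (by simp [hL])

variable [Semigroup S]

section Step

variable (w : S → List Bool)

open Classical in
noncomputable def step (a : Bool) : State S → State S
  | none => none
  | some (s, buf) =>
    match Function.partialInv w (a :: buf) with
    | some y => some (y * s, [])
    | none => if ∃ y, a :: buf <:+ w y then some (s, a :: buf) else none

noncomputable def act (u : List Bool) (x : State S) : State S :=
  u.foldr (step w) x

variable {w}

@[simp] theorem act_nil (x : State S) : act w [] x = x := rfl

@[simp] theorem act_cons (a : Bool) (u : List Bool) (x : State S) :
    act w (a :: u) x = step w a (act w u x) := rfl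

theorem act_append (u v : List Bool) (x : State S) :
    act w (u ++ v) x = act w u (act w v x) := by
  simp only [act, foldr_append]

@[simp] theorem act_none (u : List Bool) : act w u none = none := by
  induction u with
  | nil => rfl
  | cons a u ih => rw [act_cons, ih]; rfl

theorem step_of_eq (hw : Function.Injective w) {a : Bool} {buf : List Bool} {y : S}
    (hy : w y = a :: buf) (s : WithOne S) : step w a (some (s, buf)) = some (y * s, []) := by
  simp only [step, ← hy, Function.partialInv_left hw]

theorem step_of_suffix {a : Bool} {buf : List Bool} (hcode : ∀ y, w y ≠ a :: buf)
    (hsuff : ∃ y, a :: buf <:+ w y) (s : WithOne S) :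
    step w a (some (s, buf)) = some (s, a :: buf) := by
  have : Function.partialInv w (a :: buf) = none := by simp [Function.partialInv, hcode]
  simp only [step, this, if_pos hsuff]

theorem step_of_not_suffix {a : Bool} {buf : List Bool} (hsuff : ¬ ∃ y, a :: buf <:+ w y)
    (s : WithOne S) : step w a (some (s, buf)) = none := by
  have hcode : ∀ y, w y ≠ a :: buf := fun y hy => hsuff ⟨y, hy ▸ suffix_refl _⟩
  have : Function.partialInv w (a :: buf) = none := by simp [Function.partialInv, hcode]
  simp only [step, this, if_neg hsuff]

theorem act_of_suffix (hw : ∀ g h, w g <:+ w h → g = h) {g : S} {q : List Bool} (hq : q <:+ w g) (hne : q ≠ w g) (s : WithOne S) :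
    act w q (some (s, [])) = some (s, q) := by
  induction q with
  | nil => rfl
  | cons a q ih =>
    rw [act_cons, ih ((suffix_cons a q).trans hq) (fun h => by simpa [h] using hq.length_le)]
    refine step_of_suffix (fun y hy => hne ?_) ⟨g, hq⟩ s
    rw [← hy, hw y g (hy ▸ hq)]

theorem act_self (hw : ∀ g h, w g <:+ w h → g = h) (g : S) (hg : w g ≠ []) (s : WithOne S) :
    act w (w g) (some (s, [])) = some (g * s, []) := by
  obtain ⟨a, q, hq⟩ := exists_cons_of_ne_nil hg
  have hinj : Function.Injective w := fun g h hgh => hw g h (hgh ▸ suffix_refl _)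
  rw [hq, act_cons, act_of_suffix hw (hq ▸ suffix_cons a q) (fun h => by simp [h] at hq) s]
  exact step_of_eq hinj hq s

end Step

section Weight

variable {w : S → List Bool} {l : S → ℕ}

def weight (l : S → ℕ) : State S → ℕ
  | none => 0
  | some (s, buf) => WithOne.recOneCoe 0 l s + buf.length

theorem weight_step (hw : Function.Injective w) (hD1 : ∀ g h, l (g * h) ≤ l g + l h)
    (hl : ∀ g, l g ≤ (w g).length) (a : Bool) (x : State S) :
    weight l (step w a x) ≤ weight l x + 1 := by
  rcases x with _ | ⟨s, buf⟩
  · exact Nat.zero_le _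
  simp only [step]
  cases hy : Function.partialInv w (a :: buf) with
  | some y =>
    have hlen : l y ≤ buf.length + 1 := by
      simpa [(hw.isPartialInv y _).1 hy] using hl y
    refine WithOne.cases_on s ?_ fun t => ?_
    · simpa [weight] using hlen
    · simp only [weight, ← WithOne.coe_mul, WithOne.recOneCoe_coe, length_nil, add_zero]
      have := hD1 y t
      omega
  | none =>
    split_ifs
    · simp only [weight, length_cons]
      omega
    · exact Nat.zero_le _

theorem weight_act (hw : Function.Injective w) (hD1 : ∀ g h, l (g * h) ≤ l g + l h)
    (hl : ∀ g, l g ≤ (w g).length) (u : List Bool) (x : State S) :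
    weight l (act w u x) ≤ weight l x + u.length := by
  induction u with
  | nil => simp
  | cons a u ih =>
    have := weight_step hw hD1 hl a (act w u x)
    simp only [act_cons, length_cons]
    omega

theorem le_length_of_act_eq (hw : ∀ g h, w g <:+ w h → g = h)
    (hD1 : ∀ g h, l (g * h) ≤ l g + l h) (hl : ∀ g, l g ≤ (w g).length) {g : S}
    (hg : w g ≠ []) {u : List Bool} (hu : act w u (some (1, [])) = act w (w g) (some (1, []))) : l g ≤ u.length := by
  have hinj : Function.Injective w := fun g h hgh => hw g h (hgh ▸ suffix_refl _)
  have := weight_act hinj hD1 hl u (some (1, []))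
  rw [hu, act_self hw g hg] at this
  simpa [weight] using this

end Weight

section Frame

variable {w : S → List Bool}

theorem act_true_true (hframe : ∀ g, ∃ L, w g = frame L) {buf : List Bool} (hbuf : buf ≠ [])
    (s : WithOne S) : act w [true, true] (some (s, buf)) = none := by
  have hcode : ∀ y v, w y ≠ true :: v := fun y v h => by
    obtain ⟨L, hL⟩ := hframe y
    obtain ⟨r, hr⟩ := frame_eq_false_cons L
    simp [hL, hr] at h
  rw [act_cons, act_cons, act_nil]
  by_cases hsuff : ∃ y, true :: buf <:+ w y
  · rw [step_of_suffix (hcode · buf) hsuff, step_of_not_suffix]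
    rintro ⟨y, hy⟩
    obtain ⟨L, hL⟩ := hframe y
    exact hbuf (eq_nil_of_true_true_suffix_frame (hL ▸ hy))
  · rw [step_of_not_suffix hsuff]
    rfl

theorem act_mul (hw : ∀ g h, w g <:+ w h → g = h) (hframe : ∀ g, ∃ L, w g = frame L)
    (g h : S) (x : State S) : act w (w (g * h)) x = act w (w g ++ w h) x := by
  have hne := ne_nil_of_frame hframe
  rcases x with _ | ⟨s, buf⟩
  · simp
  rcases eq_or_ne buf [] with rfl | hbuf
  · rw [act_append, act_self hw h (hne h), act_self hw g (hne g), act_self hw _ (hne _),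
      WithOne.coe_mul, mul_assoc]
  · have hkill : ∀ y, act w (w y) (some (s, buf)) = none := fun y => by
      obtain ⟨L, hL⟩ := hframe y
      rw [hL, frame_eq_append_true_true, act_append, act_true_true hframe hbuf, act_none]
    rw [act_append, hkill, hkill, act_none]

end Frame

section Semigroup

variable {w : S → List Bool}

variable (w) in
noncomputable def letter (a : Bool) : Function.End (State S) :=
  step w a

theorem prod_map_letter_apply (u : List Bool) (x : State S) :
    (u.map (letter w)).prod x = act w u x := by
  induction u with
  | nil => rfl
  | cons a u ih => exact congrArg (step w a) ih

noncomputable def hom (hw : ∀ g h, w g <:+ w h → g = h) (hframe : ∀ g, ∃ L, w g = frame L) :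
    S →ₙ* Subsemigroup.closure (Set.range (letter w)) where
  toFun g := ⟨((w g).map (letter w)).prod,
    Subsemigroup.prod_map_mem_closure_range _ (ne_nil_of_frame hframe g)⟩
  map_mul' g h := by
    apply Subtype.ext
    change ((w (g * h)).map (letter w)).prod =
      ((w g).map (letter w)).prod * ((w h).map (letter w)).prod
    rw [← prod_append, ← map_append]
    funext x
    rw [prod_map_letter_apply, prod_map_letter_apply, act_mul hw hframe]

variable (hw : ∀ g h, w g <:+ w h → g = h) (hframe : ∀ g, ∃ L, w g = frame L)

theorem hom_apply_apply (g : S) (x : State S) :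
    (hom hw hframe g : Function.End (State S)) x = act w (w g) x :=
  prod_map_letter_apply _ x

theorem hom_injective : Function.Injective (hom hw hframe) := by
  intro g h hgh
  have := congrArg (fun f : Subsemigroup.closure (Set.range (letter w)) =>
    (f : Function.End (State S)) (some (1, []))) hgh
  simpa [hom_apply_apply, act_self hw _ (ne_nil_of_frame hframe _)] using this

theorem lenOf_hom {l : S → ℕ} (hD1 : ∀ g h, l (g * h) ≤ l g + l h)
    (hl : ∀ g, l g ≤ (w g).length) (g : S) :
    l g ≤ lenOf (Set.range (Subsemigroup.gen (letter w))) (hom hw hframe g) ∧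
      lenOf (Set.range (Subsemigroup.gen (letter w))) (hom hw hframe g) ≤ (w g).length := by
  have hrep := (Subsemigroup.repLen_range_gen_iff _ (hom hw hframe g) _).2
    ⟨w g, ne_nil_of_frame hframe g, rfl, rfl⟩
  refine ⟨le_lenOf ⟨_, hrep⟩ fun n hn => ?_, lenOf_le_of_repLen hrep⟩
  obtain ⟨u, -, hu, rfl⟩ := (Subsemigroup.repLen_range_gen_iff _ _ _).1 hn
  refine le_length_of_act_eq hw hD1 hl (ne_nil_of_frame hframe g) ?_
  rw [← prod_map_letter_apply, hu, hom_apply_apply]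

end Semigroup

end Decoder

section LevelCode

variable {S : Type*} (l : S → ℕ)

theorem exists_encard_level_le_two_pow
    (hD2 : ∃ a : ℝ, 0 < a ∧ ∀ r : ℕ, {g : S | l g ≤ r}.Finite ∧
      (({g : S | l g ≤ r}).ncard : ℝ) ≤ a ^ r) :
    ∃ K : ℕ, ∀ n, {g | l g = n}.Finite ∧ {g | l g = n}.encard ≤ 2 ^ (K * n) := by
  obtain ⟨a, ha, hD2⟩ := hD2
  obtain ⟨K, hK⟩ := exists_nat_gt a
  refine ⟨K, fun n => ⟨(hD2 n).1.subset fun g hg => le_of_eq hg, ?_⟩⟩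
  have hsub : {g | l g = n} ⊆ {g | l g ≤ n} := fun g hg => le_of_eq hg
  have hcard : ({g | l g ≤ n}.ncard : ℝ) ≤ (2 ^ (K * n) : ℕ) := calc
    _ ≤ a ^ n := (hD2 n).2
    _ ≤ ((2 : ℝ) ^ K) ^ n := pow_le_pow_left₀ ha.le
      (hK.le.trans (by exact_mod_cast Nat.lt_two_pow_self.le)) n
    _ = (2 ^ (K * n) : ℕ) := by push_cast; rw [pow_mul]
  calc {g | l g = n}.encard ≤ {g | l g ≤ n}.encard := Set.encard_le_encard hsub
    _ = ({g | l g ≤ n}.ncard : ℕ∞) := ((hD2 n).1.cast_ncard_eq).symm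
    _ ≤ 2 ^ (K * n) := by exact_mod_cast hcard

theorem exists_injective_on_levels (K : ℕ)
    (hK : ∀ n, {g | l g = n}.Finite ∧ {g | l g = n}.encard ≤ 2 ^ (K * n)) :
    ∃ β : S → List Bool, (∀ g, (β g).length = K * l g) ∧
      ∀ g h, l g = l h → β g = β h → g = h := by
  have hlevel (n : ℕ) : ∃ f : S → List Bool,
      {g | l g = n} ⊆ f ⁻¹' Set.range (List.ofFn (n := K * n)) ∧ Set.InjOn f {g | l g = n} := by
    refine (hK n).1.exists_injOn_of_encard_le ((hK n).2.trans ?_)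
    refine le_of_eq_of_le ?_ (List.ofFn_injective.encard_range)
    simp [ENat.card_eq_coe_fintype_card]
  choose f hf_mem hf_inj using hlevel
  refine ⟨fun g => f (l g) g, fun g => ?_, fun g h hgh hfgh => ?_⟩
  · obtain ⟨v, hv⟩ := hf_mem (l g) (rfl : l g = l g)
    simp [← hv]
  · exact hf_inj (l g) rfl hgh.symm (by simpa [hgh] using hfgh)

theorem exists_suffix_code_length_eq (K : ℕ) {β : S → List Bool}
    (hβ : ∀ g, (β g).length = K * l g) (hinj : ∀ g h, l g = l h → β g = β h → g = h) :
    ∃ c : S → List Bool, (∀ g h, c g <:+ c h → g = h) ∧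
      ∀ g, (c g).length = (K + 1) * l g + 1 := by
  refine ⟨fun g => β g ++ true :: List.replicate (l g) false, fun g h hgh => ?_, fun g => ?_⟩
  · have hl : l g = l h := List.eq_of_append_true_replicate_suffix hgh
    have heq := hgh.eq_of_length (by simp [hβ, hl])
    simp only [hl] at heq
    exact hinj g h hl (List.append_cancel_right heq)
  · simp only [List.length_append, List.length_cons, List.length_replicate, hβ]
    ring

end LevelCode

/-- any semigroup `S` with a function `l : S → ℕ` satisfying (D1) and (D2)
embeds into a semigroup `H` generated by a two-element set `B = {b₁, b₂}` so that the
restriction of `|·|_B` to `S` is equivalent to `l`. -/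
theorem stmt13 {S : Type u} [Semigroup S] (l : S → ℕ) (hpos : ∀ g, 1 ≤ l g)
    (hD1 : ∀ g h : S, l (g * h) ≤ l g + l h)
    (hD2 : ∃ a : ℝ, 0 < a ∧ ∀ r : ℕ, {g : S | l g ≤ r}.Finite ∧
      (({g : S | l g ≤ r}).ncard : ℝ) ≤ a ^ r) :
    ∃ (H : Type u) (iH : Semigroup H) (b₁ b₂ : H)
      (φ : @MulHom S H _ (@Semigroup.toMul H iH)),
      @Subsemigroup.closure H (@Semigroup.toMul H iH) {b₁, b₂} = ⊤ ∧
      Function.Injective φ ∧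
      ∃ c₁ c₂ : ℝ, 0 < c₁ ∧ 0 < c₂ ∧
        ∀ g : S, c₁ * l g ≤ (@lenOf H iH {b₁, b₂} (φ g) : ℝ) ∧
          (@lenOf H iH {b₁, b₂} (φ g) : ℝ) ≤ c₂ * l g := by
  obtain ⟨K, hK⟩ := exists_encard_level_le_two_pow l hD2
  obtain ⟨β, hβ, hβ_inj⟩ := exists_injective_on_levels l K hK
  obtain ⟨c, hc, hc_len⟩ := exists_suffix_code_length_eq l K hβ hβ_inj
  let w g := List.frame (c g)
  have hw : ∀ g h, w g <:+ w h → g = h := fun g h hgh => hc g h hgh.of_frame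
  have hframe : ∀ g, ∃ L, w g = List.frame L := fun g => ⟨c g, rfl⟩
  have hw_len g : (w g).length = 2 * ((K + 1) * l g + 1) + 3 := by simp [w, hc_len]
  have hl g : l g ≤ (w g).length := by rw [hw_len]; nlinarith
  refine ⟨_, inferInstance, Subsemigroup.gen (Decoder.letter w) false,
    Subsemigroup.gen (Decoder.letter w) true, Decoder.hom hw hframe, ?_,
    Decoder.hom_injective hw hframe, 1, 2 * K + 7, one_pos, by positivity, fun g => ?_⟩
  · rw [← Bool.range_eq]
    exact Subsemigroup.closure_range_gen _
  · rw [← Bool.range_eq, one_mul]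
    obtain ⟨hlow, hup⟩ := Decoder.lenOf_hom hw hframe hD1 hl g
    have hup' : (w g).length ≤ (2 * K + 7) * l g := by rw [hw_len]; nlinarith [hpos g]
    exact ⟨by exact_mod_cast hlow, by exact_mod_cast hup.trans hup'⟩
end

section
/- For any semigroup S and any function l : S → ℕ satisfying (D1) l(gh) ≤ l(g)+l(h) and (D2) card{g ∈ S : l(g) ≤ r} ≤ a^r for some a > 0 and all r, there exists an embedding of S into a semigroup K with a finite generating set C such that |g|_C = l(g) exactly, for all g ∈ S. -/
/-!
Encode every `g : S` by a word `enc g` of length `l g` over a finite alphabet: by (D2) at most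
`⌈a⌉ ^ n` elements satisfy `l g = n`, so `⌈a⌉` digits suffice, and flagging the first and the last
letter of each word makes the codewords a prefix code in which no occurrence of a codeword starts
strictly inside another one. Let `K` be the subsemigroup generated by the letters in the monoid
presented by the relations `enc g * enc h = enc (g * h)`. Read from left to right these relations
form a confluent rewriting system: the only overlaps are `enc g enc h enc k`, and they are resolved
by associativity in `S`. Codewords are irreducible, and by (D1) rewriting never makes a word
longer. So two codewords are equal in `K` only if they are equal, and every word representing the
image of `g` rewrites to `enc g`, hence is at least `l g` long.
-/

universe u

open Function Relation

section Words

theorem listProd_map {M N : Type*} [Semigroup M] [Semigroup N] (f : M →ₙ* N) (w : List M) :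
    listProd (w.map f) = (listProd w).map f := by
  cases w with
  | nil => rfl
  | cons a t =>
    simp only [listProd, List.map_cons, Option.map_some, List.foldl_map]
    rw [List.foldl_hom f fun x y => (map_mul f x y).symm]

theorem listProd_eq_some_prod {M : Type*} [Monoid M] {w : List M} (hw : w ≠ []) :
    listProd w = some w.prod := by
  obtain ⟨a, t, rfl⟩ := List.exists_cons_of_ne_nil hw
  rw [listProd, List.prod_cons, List.prod_eq_foldl,
    ← List.foldl_assoc (op := fun x y : M => x * y) (a₁ := a) (a₂ := 1), mul_one]

theorem repLen_range_iff {M α : Type*} [Monoid M] (f : α → M) (x : M) (n : ℕ) :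
    RepLen (Set.range f) x n ↔ ∃ w : List α, w ≠ [] ∧ (w.map f).prod = x ∧ w.length = n := by
  constructor
  · rintro ⟨w, hwf, hw, rfl⟩
    obtain ⟨w, rfl⟩ : w ∈ Set.range (List.map f) := by rw [Set.range_list_map]; exact hwf
    have hne : w ≠ [] := by rintro rfl; cases hw
    rw [listProd_eq_some_prod (by simpa using hne), Option.some_inj] at hw
    exact ⟨w, hne, hw, (List.length_map _).symm⟩
  · rintro ⟨w, hne, rfl, rfl⟩
    exact ⟨w.map f, by simp, listProd_eq_some_prod (by simpa using hne), List.length_map _⟩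

variable {M : Type*} [Semigroup M] {B : Set M}

theorem RepLen.mem_closure {x : M} {n : ℕ} (h : RepLen B x n) : x ∈ Subsemigroup.closure B := by
  obtain ⟨w, hwB, hw, -⟩ := h
  lift w to List (Subsemigroup.closure B) using
    fun y hy => Subsemigroup.subset_closure (hwB y hy)
  have := listProd_map (MulMemClass.subtype (Subsemigroup.closure B)) w
  obtain ⟨x', -, rfl⟩ := Option.map_eq_some_iff.mp (this.symm.trans hw)
  exact x'.2

theorem repLen_preimage_val_iff (x : Subsemigroup.closure B) (n : ℕ) :
    RepLen (Subtype.val ⁻¹' B) x n ↔ RepLen B (x : M) n := by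
  constructor
  · rintro ⟨w, hwB, hw, rfl⟩
    refine ⟨w.map Subtype.val, by simpa using hwB, ?_, List.length_map _⟩
    exact (listProd_map (MulMemClass.subtype _) w).trans (by rw [hw])
  · rintro ⟨w, hwB, hw, rfl⟩
    lift w to List (Subsemigroup.closure B) using
      fun y hy => Subsemigroup.subset_closure (hwB y hy)
    refine ⟨w, fun y hy => hwB y (List.mem_map_of_mem hy), ?_, (List.length_map _).symm⟩
    have := listProd_map (MulMemClass.subtype (Subsemigroup.closure B)) w
    exact Option.map_injective Subtype.val_injective (this.symm.trans hw)

theorem lenOf_eq_of_repLen {x : M} {n : ℕ} (h : RepLen B x n)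
    (hmin : ∀ m, RepLen B x m → n ≤ m) : lenOf B x = n :=
  le_antisymm (Nat.sInf_le h) (le_csInf ⟨n, h⟩ hmin)

end Words

structure IsMarkedCode {α ι : Type*} (p : α → Prop) (enc : ι → List α) : Prop where
  exists_eq_cons : ∀ i, ∃ c r, enc i = c :: r ∧ p c ∧ ∀ x ∈ r, ¬ p x
  eq_of_append_eq : ∀ {i j : ι} {u v : List α}, enc i ++ u = enc j ++ v → i = j

namespace IsMarkedCode

variable {α ι : Type*} {p : α → Prop} {enc : ι → List α} {i j : ι}

theorem append_inj (hc : IsMarkedCode p enc) {u v : List α} (h : enc i ++ u = enc j ++ v) :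
    i = j ∧ u = v := by
  obtain rfl := hc.eq_of_append_eq h
  exact ⟨rfl, List.append_cancel_left h⟩

theorem injective (hc : IsMarkedCode p enc) : Injective enc :=
  fun _ _ h => hc.eq_of_append_eq (u := []) (v := []) (congrArg (· ++ []) h)

theorem ne_nil (hc : IsMarkedCode p enc) (i : ι) : enc i ≠ [] := by
  obtain ⟨c, r, h, -⟩ := hc.exists_eq_cons i
  simp [h]

theorem eq_nil_of_eq_append_cons (hc : IsMarkedCode p enc) {z v : List α} {c : α}
    (h : enc i = z ++ c :: v) (hpc : p c) : z = [] := by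
  obtain ⟨c', r, he, -, hr⟩ := hc.exists_eq_cons i
  cases z with
  | nil => rfl
  | cons a z =>
    rw [he, List.cons_append, List.cons.injEq] at h
    exact absurd hpc (hr c (by simp [h.2]))

theorem eq_nil_or_of_append_eq (hc : IsMarkedCode p enc) {v z w : List α}
    (h : enc i ++ v = z ++ (enc j ++ w)) :
    (z = [] ∧ i = j ∧ v = w) ∨ ∃ z', z = enc i ++ z' ∧ v = z' ++ (enc j ++ w) := by
  rcases List.append_eq_append_iff.mp h with ⟨z', hz, hv⟩ | ⟨c', hi, hj⟩
  · exact Or.inr ⟨z', hz, hv⟩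
  · obtain ⟨c, r, hjr, hpc, -⟩ := hc.exists_eq_cons j
    cases c' with
    | nil =>
      rw [List.append_nil] at hi
      exact Or.inr ⟨[], by simp [hi], by simpa using hj.symm⟩
    | cons c₀ c' =>
      rw [hjr, List.cons_append, List.cons_append, List.cons.injEq] at hj
      obtain rfl := hc.eq_nil_of_eq_append_cons hi (hj.1 ▸ hpc)
      rw [List.nil_append] at h
      exact Or.inl ⟨rfl, hc.append_inj h⟩

end IsMarkedCode

section Merge

variable {α S : Type*} [Mul S] {enc : S → List α}

def Merge (enc : S → List α) (a b : List α) : Prop :=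
  ∃ x y g h, a = x ++ (enc g ++ (enc h ++ y)) ∧ b = x ++ (enc (g * h) ++ y)

theorem Merge.append_left {a b : List α} (v : List α) (h : Merge enc a b) :
    Merge enc (v ++ a) (v ++ b) := by
  obtain ⟨x, y, g, h, rfl, rfl⟩ := h
  exact ⟨v ++ x, y, g, h, by simp, by simp⟩

theorem Merge.append_right {a b : List α} (h : Merge enc a b) (v : List α) :
    Merge enc (a ++ v) (b ++ v) := by
  obtain ⟨x, y, g, h, rfl, rfl⟩ := h
  exact ⟨x, y ++ v, g, h, by simp, by simp⟩

theorem Merge.reflTransGen_append {a a' b b' : List α} (ha : ReflTransGen (Merge enc) a a')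
    (hb : ReflTransGen (Merge enc) b b') : ReflTransGen (Merge enc) (a ++ b) (a' ++ b') :=
  (ReflTransGen.lift (· ++ b) (fun _ _ h => h.append_right b) _ _ ha).trans
    (ReflTransGen.lift (a' ++ ·) (fun _ _ h => h.append_left a') _ _ hb)

theorem Merge.length_le (hlen : ∀ g h, (enc (g * h)).length ≤ (enc g).length + (enc h).length)
    {a b : List α} (h : Merge enc a b) : b.length ≤ a.length := by
  obtain ⟨x, y, g, h, rfl, rfl⟩ := h
  simp only [List.length_append]
  linarith [hlen g h]

theorem Merge.reflTransGen_length_le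
    (hlen : ∀ g h, (enc (g * h)).length ≤ (enc g).length + (enc h).length)
    {a b : List α} (h : ReflTransGen (Merge enc) a b) : b.length ≤ a.length := by
  induction h with
  | refl => rfl
  | tail _ hstep ih => exact (hstep.length_le hlen).trans ih

theorem IsMarkedCode.not_merge {p : α → Prop} (hc : IsMarkedCode p enc) (g : S) (b : List α) :
    ¬ Merge enc (enc g) b := by
  rintro ⟨x, y, g', h', he, -⟩
  obtain ⟨c, r, hr, hpc, -⟩ := hc.exists_eq_cons h'
  rw [hr, ← List.append_assoc, List.cons_append] at he
  exact hc.ne_nil g' (List.append_eq_nil_iff.mp (hc.eq_nil_of_eq_append_cons he hpc)).2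

theorem IsMarkedCode.eq_of_reflTransGen {p : α → Prop} (hc : IsMarkedCode p enc) {g : S}
    {d : List α} (h : ReflTransGen (Merge enc) (enc g) d) : d = enc g := by
  rcases h.cases_head with rfl | ⟨c, hstep, -⟩
  · rfl
  · exact absurd hstep (hc.not_merge g c)

end Merge

namespace IsMarkedCode

variable {α S : Type*} [Semigroup S] {p : α → Prop} {enc : S → List α}

theorem merge_diamond_of_length_le (hc : IsMarkedCode p enc) {x₁ y₁ x₂ y₂ : List α}
    {g₁ h₁ g₂ h₂ : S}
    (hx : x₁ ++ (enc g₁ ++ (enc h₁ ++ y₁)) = x₂ ++ (enc g₂ ++ (enc h₂ ++ y₂)))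
    (hle : x₁.length ≤ x₂.length) :
    x₁ ++ (enc (g₁ * h₁) ++ y₁) = x₂ ++ (enc (g₂ * h₂) ++ y₂) ∨
      ∃ d, Merge enc (x₁ ++ (enc (g₁ * h₁) ++ y₁)) d ∧
        Merge enc (x₂ ++ (enc (g₂ * h₂) ++ y₂)) d := by
  obtain ⟨z, rfl, hz⟩ : ∃ z, x₂ = x₁ ++ z ∧
      enc g₁ ++ (enc h₁ ++ y₁) = z ++ (enc g₂ ++ (enc h₂ ++ y₂)) := by
    obtain ⟨z, rfl⟩ := List.prefix_of_prefix_length_le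
      (hx ▸ List.prefix_append _ _) (List.prefix_append _ _) hle
    exact ⟨z, rfl, by simpa using hx⟩
  rcases hc.eq_nil_or_of_append_eq hz with ⟨rfl, rfl, hy⟩ | ⟨z', rfl, hy⟩
  · obtain ⟨rfl, rfl⟩ := hc.append_inj hy
    exact Or.inl (by simp)
  rcases hc.eq_nil_or_of_append_eq hy with ⟨rfl, rfl, rfl⟩ | ⟨z'', rfl, rfl⟩
  · exact Or.inr ⟨x₁ ++ (enc (g₁ * h₁ * h₂) ++ y₂), ⟨x₁, y₂, g₁ * h₁, h₂, by simp, rfl⟩,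
      ⟨x₁, y₂, g₁, h₁ * h₂, by simp, by rw [mul_assoc]⟩⟩
  · exact Or.inr ⟨x₁ ++ (enc (g₁ * h₁) ++ (z'' ++ (enc (g₂ * h₂) ++ y₂))),
      ⟨x₁ ++ enc (g₁ * h₁) ++ z'', y₂, g₂, h₂, by simp, by simp⟩,
      ⟨x₁, z'' ++ (enc (g₂ * h₂) ++ y₂), g₁, h₁, by simp, by simp⟩⟩

theorem merge_diamond (hc : IsMarkedCode p enc) {a b c : List α}
    (hab : Merge enc a b) (hac : Merge enc a c) :
    ∃ d, ReflGen (Merge enc) b d ∧ ReflTransGen (Merge enc) c d := by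
  obtain ⟨x₁, y₁, g₁, h₁, rfl, rfl⟩ := hab
  obtain ⟨x₂, y₂, g₂, h₂, ha, rfl⟩ := hac
  rcases le_total x₁.length x₂.length with hle | hle
  · rcases hc.merge_diamond_of_length_le ha hle with h | ⟨d, hbd, hcd⟩
    · exact ⟨_, .refl, h ▸ .refl⟩
    · exact ⟨d, .single hbd, .single hcd⟩
  · rcases hc.merge_diamond_of_length_le ha.symm hle with h | ⟨d, hcd, hbd⟩
    · exact ⟨_, .refl, h ▸ .refl⟩
    · exact ⟨d, .single hbd, .single hcd⟩

def mergeCon (hc : IsMarkedCode p enc) : Con (FreeMonoid α) where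
  r x y := Join (ReflTransGen (Merge enc)) x.toList y.toList
  iseqv := (equivalence_join_reflTransGen fun _ _ _ => hc.merge_diamond).comap _
  mul' := fun ⟨c, hac, hbc⟩ ⟨d, had, hbd⟩ =>
    ⟨c ++ d, Merge.reflTransGen_append hac had, Merge.reflTransGen_append hbc hbd⟩

end IsMarkedCode

theorem PresentedMonoid.prod_map_of {α : Type*} {rels : FreeMonoid α → FreeMonoid α → Prop}
    (w : List α) : (w.map (of rels)).prod = mk rels (FreeMonoid.ofList w) := by
  rw [← FreeMonoid.lift_ofList, ← FreeMonoid.lift_restrict (mk rels)]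
  rfl

def mergeRels {α S : Type*} [Mul S] (enc : S → List α) (x y : FreeMonoid α) : Prop :=
  ∃ g h, x = FreeMonoid.ofList (enc g ++ enc h) ∧ y = FreeMonoid.ofList (enc (g * h))

namespace IsMarkedCode

open PresentedMonoid (of mk_eq_mk_iff mk_eq_mk_of_rel prod_map_of)

theorem reflTransGen_of_mk_eq {α S : Type*} [Semigroup S] {p : α → Prop} {enc : S → List α}
    (hc : IsMarkedCode p enc) {w : List α} {g : S}
    (h : PresentedMonoid.mk (mergeRels enc) (FreeMonoid.ofList w) =
      PresentedMonoid.mk _ (FreeMonoid.ofList (enc g))) :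
    ReflTransGen (Merge enc) w (enc g) := by
  have hle : conGen (mergeRels enc) ≤ hc.mergeCon := Con.conGen_le.2 <| by
    rintro _ _ ⟨g, h, rfl, rfl⟩
    exact ⟨_, .single ⟨[], [], g, h, by simp, by simp⟩, .refl⟩
  obtain ⟨d, hwd, hgd⟩ := Con.le_def.1 hle (mk_eq_mk_iff.1 h)
  exact hc.eq_of_reflTransGen hgd ▸ hwd

theorem exists_lenOf_eq_length {α S : Type u} [Finite α] [Semigroup S] {p : α → Prop}
    {enc : S → List α} (hc : IsMarkedCode p enc)
    (hlen : ∀ g h, (enc (g * h)).length ≤ (enc g).length + (enc h).length) :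
    ∃ (K : Type u) (_ : Semigroup K) (C : Set K) (φ : S →ₙ* K), C.Finite ∧
      Subsemigroup.closure C = ⊤ ∧ Injective φ ∧ ∀ g, lenOf C (φ g) = (enc g).length := by
  set B := Set.range (of (mergeRels enc))
  have hrep (x : PresentedMonoid (mergeRels enc)) (n : ℕ) : RepLen B x n ↔
      ∃ w : List α, w ≠ [] ∧ PresentedMonoid.mk _ (FreeMonoid.ofList w) = x ∧ w.length = n := by
    simp only [B, repLen_range_iff, prod_map_of]
  have hrep_enc (g : S) :
      RepLen B (PresentedMonoid.mk _ (FreeMonoid.ofList (enc g))) (enc g).length :=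
    (hrep _ _).2 ⟨enc g, hc.ne_nil g, rfl, rfl⟩
  let φ : S →ₙ* Subsemigroup.closure B :=
    { toFun g := ⟨_, (hrep_enc g).mem_closure⟩
      map_mul' g h := Subtype.ext (mk_eq_mk_of_rel ⟨g, h, rfl, rfl⟩).symm }
  refine ⟨Subsemigroup.closure B, inferInstance, Subtype.val ⁻¹' B, φ,
    (Set.finite_range _).preimage Subtype.val_injective.injOn,
    Subsemigroup.closure_closure_coe_preimage, fun g g' h => ?_, fun g => ?_⟩
  · exact hc.injective
      (hc.eq_of_reflTransGen (hc.reflTransGen_of_mk_eq (congrArg Subtype.val h))).symm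
  · refine lenOf_eq_of_repLen ((repLen_preimage_val_iff _ _).2 (hrep_enc g)) fun n hn => ?_
    obtain ⟨w, -, hw, rfl⟩ := (hrep _ _).1 ((repLen_preimage_val_iff _ _).1 hn)
    exact Merge.reflTransGen_length_le hlen (hc.reflTransGen_of_mk_eq hw)

end IsMarkedCode

section Frame

variable {β : Type*}

def frame (w : List β) : List (Bool × Bool × β) :=
  w.mapIdx fun i b => (decide (i = 0), decide (i + 1 = w.length), b)

@[simp] theorem length_frame (w : List β) : (frame w).length = w.length := List.length_mapIdx

theorem map_frame (w : List β) : (frame w).map (fun x => x.2.2) = w := by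
  apply List.ext_getElem <;> simp [frame]

theorem frame_injective : Injective (frame (β := β)) :=
  LeftInverse.injective map_frame

theorem frame_eq_of_append_eq {w w' : List β} {u u' : List (Bool × Bool × β)} (hw : w ≠ [])
    (hw' : w' ≠ []) (h : frame w ++ u = frame w' ++ u') : w = w' := by
  wlog hle : w.length ≤ w'.length generalizing w w' u u'
  · exact (this hw' hw h.symm (le_of_not_ge hle)).symm
  have hpre : frame w <+: frame w' := List.prefix_of_prefix_length_le
    (h ▸ List.prefix_append _ _) (List.prefix_append _ _) (by simpa using hle)
  have hpos : 0 < w.length := List.length_pos_iff.mpr hw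
  have hlast := hpre.getElem (i := w.length - 1) (by simp; omega)
  simp only [frame, List.getElem_mapIdx, Prod.mk.injEq, Nat.sub_add_cancel hpos] at hlast
  have hlen : w.length = w'.length := by simpa using hlast.2.1
  exact frame_injective (hpre.eq_of_length (by simpa using hlen))

theorem isMarkedCode_frame {ι : Type*} {d : ι → List β} (hd : Injective d)
    (hne : ∀ i, d i ≠ []) :
    IsMarkedCode (fun x : Bool × Bool × β => x.1 = true) fun i => frame (d i) where
  exists_eq_cons i := by
    obtain ⟨b, t, ht⟩ := List.exists_cons_of_ne_nil (hne i)
    refine ⟨_, _, by rw [frame, ht, List.mapIdx_cons], rfl, ?_⟩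
    simp [List.mem_mapIdx]
  eq_of_append_eq h := hd (frame_eq_of_append_eq (hne _) (hne _) h)

end Frame

theorem exists_injective_length_eq {S β : Type*} [Fintype β] (l : S → ℕ)
    (hfin : ∀ n, {g | l g = n}.Finite) (hcard : ∀ n, {g | l g = n}.ncard ≤ Fintype.card β ^ n) :
    ∃ d : S → List β, Injective d ∧ ∀ g, (d g).length = l g := by
  have he (n : ℕ) : Nonempty ({g // l g = n} ↪ List.Vector β n) := by
    have : Finite {g // l g = n} := (hfin n).to_subtype
    have := Fintype.ofFinite {g // l g = n}
    apply Function.Embedding.nonempty_of_card_le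
    rw [card_vector, Fintype.card_eq_nat_card]
    exact (Nat.card_coe_set_eq _).trans_le (hcard n)
  let e n := (he n).some
  let d : S ↪ List β := ((Equiv.sigmaFiberEquiv l).symm.toEmbedding.trans
    (Embedding.sigmaMap (Embedding.refl ℕ) e)).trans (Equiv.sigmaFiberEquiv List.length).toEmbedding
  exact ⟨d, d.injective, fun g => (e (l g) ⟨g, rfl⟩).2⟩

/-- any semigroup `S` with a function `l : S → ℕ` satisfying (D1) and (D2)
embeds into a semigroup `K` with a finite generating set `C` so that `|g|_C = l(g)` exactly. -/
theorem stmt14 {S : Type u} [Semigroup S] (l : S → ℕ) (hpos : ∀ g, 1 ≤ l g)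
    (hD1 : ∀ g h : S, l (g * h) ≤ l g + l h)
    (hD2 : ∃ a : ℝ, 0 < a ∧ ∀ r : ℕ, {g : S | l g ≤ r}.Finite ∧
      (({g : S | l g ≤ r}).ncard : ℝ) ≤ a ^ r) :
    ∃ (K : Type u) (iK : Semigroup K) (C : Set K)
      (φ : @MulHom S K _ (@Semigroup.toMul K iK)),
      C.Finite ∧
      @Subsemigroup.closure K (@Semigroup.toMul K iK) C = ⊤ ∧
      Function.Injective φ ∧
      ∀ g : S, @lenOf K iK C (φ g) = l g := by
  obtain ⟨a, ha, hball⟩ := hD2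
  have hfin (n : ℕ) : {g | l g = n}.Finite := (hball n).1.subset fun _ hg => hg.le
  have hcard (n : ℕ) : {g | l g = n}.ncard ≤ Fintype.card (ULift.{u} (Fin ⌈a⌉₊)) ^ n := by
    rw [Fintype.card_ulift, Fintype.card_fin]
    have hsphere : ({g | l g = n}.ncard : ℝ) ≤ {g | l g ≤ n}.ncard :=
      Nat.cast_le.2 (Set.ncard_le_ncard (fun _ hg => hg.le) (hball n).1)
    exact_mod_cast hsphere.trans ((hball n).2.trans (pow_le_pow_left₀ ha.le (Nat.le_ceil a) n))
  obtain ⟨d, hd, hdl⟩ := exists_injective_length_eq l hfin hcard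
  have hc := isMarkedCode_frame hd fun g => List.length_pos_iff.mp ((hdl g).symm ▸ hpos g)
  obtain ⟨K, iK, C, φ, hC, hCK, hφ, hlenOf⟩ :=
    hc.exists_lenOf_eq_length (by simpa only [length_frame, hdl] using hD1)
  exact ⟨K, iK, C, φ, hC, hCK, hφ, fun g => by rw [hlenOf, length_frame, hdl]⟩
end

section
/- Let H be a semigroup with finite generating set B embedded into a semigroup R with finite generating set T via Murskii's embedding (so that every word W over T equal in R to a word P over B decomposes as W ≡ P₀U₁P₁⋯U_lP_l with the P_i words over B, each U_i containing after deletions a subword of the same length as a word R_i over B, and P₀R₁P₁⋯R_lP_l = P in H). Then |P|_B ≤ |P|_T ; i.e., the embedding of H into R is undistorted. -/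
/-!
Take a shortest word `W` over `T` for `φ P`. Murskii's decomposition `W ≡ P₀U₁P₁⋯U_lP_l` lets us
replace every `U_i` by a word `R_i` over `φ(B)` that is no longer, producing a word over `φ(B)` of
length at most `|W| = |φ P|_T` which still represents `φ P`; since `φ` is injective, it pulls back
to a word over `B` representing `P`.
-/

section listProd

variable {M N : Type*} [Semigroup M] [Semigroup N]

theorem listProd_append {l₁ l₂ : List M} {x y : M}
    (h₁ : listProd l₁ = some x) (h₂ : listProd l₂ = some y) :
    listProd (l₁ ++ l₂) = some (x * y) := by
  match l₁, l₂, h₁, h₂ with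
  | a :: t, b :: s, rfl, rfl =>
    simp only [listProd, List.cons_append, List.foldl_append, List.foldl_cons, List.foldl_assoc]

theorem listProd_map_s19 (φ : M →ₙ* N) (l : List M) : listProd (l.map φ) = (listProd l).map φ := by
  cases l with
  | nil => rfl
  | cons a t =>
    simp only [listProd, List.map_cons, Option.map_some, List.foldl_map]
    exact congrArg some (List.foldl_hom φ fun x y => (map_mul φ x y).symm)

theorem exists_listProd_eq_of_mem_closure {T : Set M} {x : M} (hx : x ∈ Subsemigroup.closure T) :
    ∃ w : List M, (∀ y ∈ w, y ∈ T) ∧ listProd w = some x := by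
  induction hx using Subsemigroup.closure_induction with
  | mem y hy => exact ⟨[y], by simpa using hy, rfl⟩
  | mul a b _ _ iha ihb =>
    obtain ⟨w₁, hw₁, hp₁⟩ := iha
    obtain ⟨w₂, hw₂, hp₂⟩ := ihb
    exact ⟨w₁ ++ w₂, fun y hy => (List.mem_append.1 hy).elim (hw₁ y) (hw₂ y),
      listProd_append hp₁ hp₂⟩

theorem lenOf_le_length {B : Set M} {x : M} {w : List M} (hwB : ∀ y ∈ w, y ∈ B)
    (hw : listProd w = some x) : lenOf B x ≤ w.length :=
  Nat.sInf_le ⟨w, hwB, hw, rfl⟩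

theorem exists_length_eq_lenOf {T : Set M} {x : M} (hx : x ∈ Subsemigroup.closure T) :
    ∃ w : List M, (∀ y ∈ w, y ∈ T) ∧ listProd w = some x ∧ w.length = lenOf T x := by
  obtain ⟨w, hwT, hw⟩ := exists_listProd_eq_of_mem_closure hx
  exact Nat.sInf_mem (s := {n | RepLen T x n}) ⟨w.length, w, hwT, hw, rfl⟩

end listProd

theorem List.exists_map_eq_of_forall_mem_image {α β : Type*} (f : α → β) (s : Set α) :
    ∀ l : List β, (∀ y ∈ l, y ∈ f '' s) → ∃ w : List α, (∀ x ∈ w, x ∈ s) ∧ w.map f = l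
  | [], _ => ⟨[], by simp, rfl⟩
  | b :: l, h => by
    obtain ⟨a, ha, rfl⟩ := h b List.mem_cons_self
    obtain ⟨w, hw, rfl⟩ :=
      exists_map_eq_of_forall_mem_image f s l fun y hy => h y (List.mem_cons_of_mem _ hy)
    exact ⟨a :: w, by simpa [ha] using hw, rfl⟩

theorem lenOf_le_length_of_map {H R : Type*} [Semigroup H] [Semigroup R] {B : Set H}
    {φ : H →ₙ* R} (hφ : Function.Injective φ) {P : H} {V : List R}
    (hVB : ∀ y ∈ V, y ∈ φ '' B) (hV : listProd V = some (φ P)) : lenOf B P ≤ V.length := by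
  obtain ⟨w, hwB, rfl⟩ := List.exists_map_eq_of_forall_mem_image φ B V hVB
  obtain ⟨Q, hw, hQ⟩ := Option.map_eq_some_iff.1 ((listProd_map_s19 φ w).symm.trans hV)
  rw [List.length_map, ← hφ hQ]
  exact lenOf_le_length hwB hw

theorem List.length_flatten_map_le {α β : Type*} {l : List α} {f g : α → List β}
    (h : ∀ a ∈ l, (f a).length ≤ (g a).length) :
    (l.map f).flatten.length ≤ (l.map g).flatten.length := by
  simp only [List.length_flatten, List.map_map, Function.comp_def]
  exact List.sum_le_sum h

/-- In the hypothesis `murskii`, `trip` is the list of triples `(U_i, R_i, P_i)`. -/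
theorem stmt19_general {H R : Type*} [Semigroup H] [Semigroup R]
    (B : Set H) (T : Set R)
    (hTgen : Subsemigroup.closure T = ⊤)
    (φ : H →ₙ* R) (hφ : Function.Injective φ)
    (murskii : ∀ (P : H) (W : List R), (∀ x ∈ W, x ∈ T) → listProd W = some (φ P) →
      ∃ (P₀ : List R) (trip : List (List R × List R × List R)),
        (∀ x ∈ P₀, x ∈ φ '' B) ∧
        (∀ t ∈ trip,
          (∀ x ∈ t.1, x ∈ T) ∧ (∀ x ∈ t.2.1, x ∈ φ '' B) ∧ (∀ x ∈ t.2.2, x ∈ φ '' B) ∧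
          t.2.1.length ≤ t.1.length) ∧
        W = P₀ ++ (trip.map fun t => t.1 ++ t.2.2).flatten ∧
        listProd (P₀ ++ (trip.map fun t => t.2.1 ++ t.2.2).flatten) = some (φ P)) :
    ∀ P : H, lenOf B P ≤ lenOf T (φ P) := by
  intro P
  obtain ⟨W, hWT, hW, hWlen⟩ := exists_length_eq_lenOf (x := φ P) (hTgen ▸ Subsemigroup.mem_top _)
  obtain ⟨P₀, trip, hP₀, htrip, rfl, hV⟩ := murskii P W hWT hW
  have hVB : ∀ y ∈ P₀ ++ (trip.map fun t => t.2.1 ++ t.2.2).flatten, y ∈ φ '' B := by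
    simp only [List.mem_append, List.mem_flatten, List.mem_map]
    rintro y (hy | ⟨_, ⟨t, ht, rfl⟩, hy⟩)
    · exact hP₀ y hy
    · exact (List.mem_append.1 hy).elim ((htrip t ht).2.1 y) ((htrip t ht).2.2.1 y)
  calc lenOf B P ≤ (P₀ ++ (trip.map fun t => t.2.1 ++ t.2.2).flatten).length :=
        lenOf_le_length_of_map hφ hVB hV
    _ ≤ (P₀ ++ (trip.map fun t => t.1 ++ t.2.2).flatten).length := by
        simp only [List.length_append]
        gcongr
        exact List.length_flatten_map_le fun t ht => by
          simpa only [List.length_append] using Nat.add_le_add_right (htrip t ht).2.2.2 _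
    _ = lenOf T (φ P) := hWlen

/-- Murskii's embedding is undistorted.  `H` (generated by `B`) embeds in `R`
(generated by `T`) via `φ`, and the hypothesis `murskii` is the structural decomposition of
Murskii's Lemma 3.3: every word `W` over `T` equal in `R` to (the image of) a word over `B`
representing `P ∈ H` decomposes as `W ≡ P₀U₁P₁⋯U_lP_l` with the `P_i` words over (the image
of) `B`, and there are words `R_i` over (the image of) `B`, with `‖R_i‖ ≤ ‖U_i‖`, such that
`P₀R₁P₁⋯R_lP_l` is equal to `P` in `H`.  Then `|P|_B ≤ |P|_T`. -/
theorem stmt19 {H R : Type*} [Semigroup H] [Semigroup R]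
    (B : Set H) (T : Set R) (hBfin : B.Finite) (hTfin : T.Finite)
    (hBgen : Subsemigroup.closure B = ⊤) (hTgen : Subsemigroup.closure T = ⊤)
    (φ : H →ₙ* R) (hφ : Function.Injective φ)
    (murskii : ∀ (P : H) (W : List R), (∀ x ∈ W, x ∈ T) → listProd W = some (φ P) →
      ∃ (P₀ : List R) (trip : List (List R × List R × List R)),
        (∀ x ∈ P₀, x ∈ φ '' B) ∧
        (∀ t ∈ trip,
          (∀ x ∈ t.1, x ∈ T) ∧ (∀ x ∈ t.2.1, x ∈ φ '' B) ∧ (∀ x ∈ t.2.2, x ∈ φ '' B) ∧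
          t.2.1.length ≤ t.1.length) ∧
        W = P₀ ++ (trip.map fun t => t.1 ++ t.2.2).flatten ∧
        listProd (P₀ ++ (trip.map fun t => t.2.1 ++ t.2.2).flatten) = some (φ P)) :
    ∀ P : H, lenOf B P ≤ lenOf T (φ P) :=
  stmt19_general B T hTgen φ hφ murskii
end
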